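/- arXiv:2408.14022 — 6 statements merged into one kernel-verified Lean document; each statement's English description precedes it below -/
import Mathlib

section
/- If G[S] and G[S'] are two locally h-clique densest subgraphs of G with S ≠ S', then S ∩ S' = ∅. -/
open Finset

variable {V : Type*} [Fintype V] [DecidableEq V]

/-- `Ψ_h(G[S])`: the set of `h`-cliques of `G` all of whose vertices lie in `S`
(equivalently, the `h`-cliques of the induced subgraph `G[S]`). -/
def cliquesIn (G : SimpleGraph V) [DecidableRel G.Adj] (h : ℕ) (S : Finset V) :
    Finset (Finset V) :=
  Finset.univ.filter fun c => G.IsNClique h c ∧ c ⊆ S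

/-- the `h`-clique density `d_h(G[S]) = |Ψ_h(G[S])| / |S|`. -/
noncomputable def cliqueDensity (G : SimpleGraph V) [DecidableRel G.Adj] (h : ℕ)
    (S : Finset V) : ℝ :=
  ((cliquesIn G h S).card : ℝ) / (S.card : ℝ)

/-- `G[S]` is `h`-clique `ρ`-compact: `S` is nonempty, the induced subgraph is
connected, and removing any nonempty `U ⊆ S` removes at least `ρ·|U|` `h`-cliques. -/
def IsCliqueCompact (G : SimpleGraph V) [DecidableRel G.Adj] (h : ℕ) (ρ : ℝ)
    (S : Finset V) : Prop :=
  S.Nonempty ∧ (G.induce (S : Set V)).Connected ∧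
    ∀ U ⊆ S, U.Nonempty →
      ρ * (U.card : ℝ) ≤ ((cliquesIn G h S).card : ℝ) - ((cliquesIn G h (S \ U)).card : ℝ)

/-- `G[S]` is a locally `h`-clique densest subgraph of `G`. -/
def IsLhCDS (G : SimpleGraph V) [DecidableRel G.Adj] (h : ℕ) (S : Finset V) : Prop :=
  IsCliqueCompact G h (cliqueDensity G h S) S ∧
    ¬ ∃ S' : Finset V, S ⊂ S' ∧ IsCliqueCompact G h (cliqueDensity G h S) S'

/-- the `h`-clique compact number `φ_h(u)` of a vertex `u`. -/
noncomputable def compactNumber (G : SimpleGraph V) [DecidableRel G.Adj] (h : ℕ)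
    (u : V) : ℝ :=
  sSup {ρ : ℝ | 0 ≤ ρ ∧ ∃ S : Finset V, u ∈ S ∧ IsCliqueCompact G h ρ S}

/-- `α` is a feasible solution to the convex program `CP(G,h)`: each `h`-clique
distributes a unit weight, nonnegatively, among its vertices. -/
def CPFeasible (G : SimpleGraph V) [DecidableRel G.Adj] (h : ℕ)
    (α : Finset V → V → ℝ) : Prop :=
  (∀ ψ ∈ cliquesIn G h Finset.univ, ∀ u ∈ ψ, 0 ≤ α ψ u) ∧
    (∀ ψ ∈ cliquesIn G h Finset.univ, ∑ u ∈ ψ, α ψ u = 1)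

/-- `r(u)`: the total weight received by vertex `u` under `α`. -/
def cpR (G : SimpleGraph V) [DecidableRel G.Adj] (h : ℕ) (α : Finset V → V → ℝ)
    (u : V) : ℝ :=
  ∑ ψ ∈ (cliquesIn G h Finset.univ).filter (fun ψ => u ∈ ψ), α ψ u

/-- `α` is an optimal solution to `CP(G,h)`: it is feasible and minimizes
`Σ_u r(u)²` over all feasible solutions. -/
def CPOptimal (G : SimpleGraph V) [DecidableRel G.Adj] (h : ℕ)
    (α : Finset V → V → ℝ) : Prop :=
  CPFeasible G h α ∧
    ∀ β : Finset V → V → ℝ, CPFeasible G h β →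
      ∑ u : V, (cpR G h α u) ^ 2 ≤ ∑ u : V, (cpR G h β u) ^ 2

/-!
Let `S ≠ S'` be locally densest and intersecting, with `d(S) ≤ d(S')`. Deleting `U` from
`S ∪ S'` destroys the cliques of `S` meeting `U ∩ S` and, disjointly from those, the cliques of
`S'` meeting `U \ S`; hence `S ∪ S'` is `d(S)`-compact, and maximality of `S` forces `S' ⊊ S`.
Applying compactness of `S` to `U = S \ S'` gives `d(S') ≤ d(S)`, so `S` is `d(S')`-compact,
contradicting maximality of `S'`.
-/

def cliquesHit (G : SimpleGraph V) [DecidableRel G.Adj] (h : ℕ) (S U : Finset V) :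
    Finset (Finset V) :=
  cliquesIn G h S \ cliquesIn G h (S \ U)

section

variable {G : SimpleGraph V} [DecidableRel G.Adj] {h : ℕ}

lemma mem_cliquesIn {S c : Finset V} : c ∈ cliquesIn G h S ↔ G.IsNClique h c ∧ c ⊆ S := by
  simp [cliquesIn]

lemma cliquesIn_mono {S T : Finset V} (hST : S ⊆ T) : cliquesIn G h S ⊆ cliquesIn G h T :=
  fun _ hc => mem_cliquesIn.2 ⟨(mem_cliquesIn.1 hc).1, (mem_cliquesIn.1 hc).2.trans hST⟩

lemma mem_cliquesHit {S U c : Finset V} :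
    c ∈ cliquesHit G h S U ↔ G.IsNClique h c ∧ c ⊆ S ∧ ¬Disjoint c U := by
  simp only [cliquesHit, mem_sdiff, mem_cliquesIn, subset_sdiff]
  tauto

lemma cast_card_cliquesHit (S U : Finset V) :
    ((cliquesHit G h S U).card : ℝ) = (cliquesIn G h S).card - (cliquesIn G h (S \ U)).card := by
  rw [cliquesHit, card_sdiff_of_subset (cliquesIn_mono sdiff_subset),
    Nat.cast_sub (card_le_card (cliquesIn_mono sdiff_subset))]

/-- A clique of `G[S']` meeting `U \ S` is not a clique of `G[S]`, so the two families on the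
left are disjoint. -/
lemma card_cliquesHit_add_card_cliquesHit_sdiff_le (S S' U : Finset V) :
    (cliquesHit G h S U).card + (cliquesHit G h S' (U \ S)).card ≤
      (cliquesHit G h (S ∪ S') U).card := by
  have hdisj : Disjoint (cliquesHit G h S U) (cliquesHit G h S' (U \ S)) :=
    disjoint_left.2 fun c hc hc' =>
      (mem_cliquesHit.1 hc').2.2 (disjoint_sdiff.mono_left (mem_cliquesHit.1 hc).2.1)
  rw [← card_union_of_disjoint hdisj]
  refine card_le_card (union_subset (fun c hc => ?_) (fun c hc => ?_))
  · obtain ⟨hclique, hcS, hcU⟩ := mem_cliquesHit.1 hc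
    exact mem_cliquesHit.2 ⟨hclique, hcS.trans subset_union_left, hcU⟩
  · obtain ⟨hclique, hcS', hcU⟩ := mem_cliquesHit.1 hc
    exact mem_cliquesHit.2 ⟨hclique, hcS'.trans subset_union_right,
      fun hdisjU => hcU (hdisjU.mono_right sdiff_subset)⟩

lemma cliqueDensity_nonneg (S : Finset V) : 0 ≤ cliqueDensity G h S := by
  unfold cliqueDensity
  positivity

lemma IsCliqueCompact.mono {ρ ρ' : ℝ} {S : Finset V} (hS : IsCliqueCompact G h ρ S)
    (hρ : ρ' ≤ ρ) : IsCliqueCompact G h ρ' S :=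
  ⟨hS.1, hS.2.1, fun U hU hUne =>
    (mul_le_mul_of_nonneg_right hρ (Nat.cast_nonneg _)).trans (hS.2.2 U hU hUne)⟩

lemma IsCliqueCompact.mul_card_inter_le {ρ : ℝ} {S : Finset V} (hS : IsCliqueCompact G h ρ S)
    (U : Finset V) : ρ * (U ∩ S).card ≤ (cliquesHit G h S U).card := by
  rcases (U ∩ S).eq_empty_or_nonempty with hempty | hne
  · rw [hempty, cliquesHit,
      sdiff_eq_self_of_disjoint (disjoint_iff_inter_eq_empty.2 hempty).symm]
    simp
  · simpa only [cast_card_cliquesHit, sdiff_inter_self_right] using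
      hS.2.2 _ inter_subset_right hne

lemma IsCliqueCompact.union {ρ ρ' : ℝ} {S S' : Finset V} (hS : IsCliqueCompact G h ρ S)
    (hS' : IsCliqueCompact G h ρ' S') (hρ : ρ ≤ ρ') (hmeet : (S ∩ S').Nonempty) :
    IsCliqueCompact G h ρ (S ∪ S') := by
  refine ⟨hS.1.mono subset_union_left, ?_, fun U hU _ => ?_⟩
  · rw [coe_union]
    exact SimpleGraph.induce_union_connected hS.2.1.preconnected hS'.2.1.preconnected
      (by exact_mod_cast hmeet)
  have hUS : (U \ S) ∩ S' = U \ S := inter_eq_left.2 fun _ hx =>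
    (mem_union.1 (hU (mem_sdiff.1 hx).1)).resolve_left (mem_sdiff.1 hx).2
  have hsplit : ((U ∩ S).card : ℝ) + (U \ S).card = U.card := by
    exact_mod_cast card_inter_add_card_sdiff U S
  have hcount : ((cliquesHit G h S U).card : ℝ) + (cliquesHit G h S' (U \ S)).card ≤
      (cliquesHit G h (S ∪ S') U).card := by
    exact_mod_cast card_cliquesHit_add_card_cliquesHit_sdiff_le S S' U
  have hinS := hS.mul_card_inter_le U
  have hinS' := hS'.mul_card_inter_le (U \ S)
  rw [hUS] at hinS'
  rw [← cast_card_cliquesHit]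
  calc ρ * U.card = ρ * (U ∩ S).card + ρ * (U \ S).card := by rw [← hsplit]; ring
    _ ≤ ρ * (U ∩ S).card + ρ' * (U \ S).card := by gcongr
    _ ≤ _ := by linarith

lemma IsCliqueCompact.cliqueDensity_le_of_subset {S T : Finset V}
    (hS : IsCliqueCompact G h (cliqueDensity G h S) S) (hTS : T ⊆ S) :
    cliqueDensity G h T ≤ cliqueDensity G h S := by
  have hΨS : cliqueDensity G h S * S.card = (cliquesIn G h S).card :=
    div_mul_cancel₀ _ (Nat.cast_ne_zero.2 (card_ne_zero.2 hS.1))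
  have hremove := hS.mul_card_inter_le (S \ T)
  rw [inter_eq_left.2 sdiff_subset, cast_card_cliquesHit, Finset.sdiff_sdiff_eq_self hTS,
    card_sdiff_of_subset hTS, Nat.cast_sub (card_le_card hTS)] at hremove
  exact div_le_of_le_mul₀ (Nat.cast_nonneg _) (cliqueDensity_nonneg S) (by linarith)

end

theorem stmt_2_general (G : SimpleGraph V) [DecidableRel G.Adj] (h : ℕ)
    (S S' : Finset V) (hS : IsLhCDS G h S) (hS' : IsLhCDS G h S')
    (hne : S ≠ S') :
    S ∩ S' = ∅ := by
  by_contra hmeet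
  wlog hle : cliqueDensity G h S ≤ cliqueDensity G h S' generalizing S S'
  · exact this S' S hS' hS hne.symm (by rwa [inter_comm]) (le_of_not_ge hle)
  have hsub : S' ⊆ S := by
    by_contra hnot
    exact hS.2 ⟨S ∪ S', left_lt_sup.2 hnot,
      hS.1.union hS'.1 hle (nonempty_iff_ne_empty.2 hmeet)⟩
  exact hS'.2 ⟨S, hsub.ssubset_of_ne hne.symm,
    hS.1.mono (hS.1.cliqueDensity_le_of_subset hsub)⟩

/-- Two distinct locally `h`-clique densest subgraphs are disjoint. -/
theorem stmt_2 (G : SimpleGraph V) [DecidableRel G.Adj] (h : ℕ) (hh : 2 ≤ h)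
    (S S' : Finset V) (hS : IsLhCDS G h S) (hS' : IsLhCDS G h S')
    (hne : S ≠ S') :
    S ∩ S' = ∅ :=
  stmt_2_general G h S S' hS hS' hne
end

section
/- Let k be a nonnegative integer and let S ⊆ V be nonempty. If G[S] is connected and every vertex v ∈ S is contained in at least k h-cliques of G[S], then G[S] is h-clique (k/h)-compact. -/
open Finset

variable {V : Type*} [Fintype V] [DecidableEq V]

/-- If `G[S]` (S nonempty) is connected and every vertex of `S` lies
in at least `k` `h`-cliques of `G[S]`, then `G[S]` is `h`-clique `(k/h)`-compact. -/
theorem stmt_5 (G : SimpleGraph V) [DecidableRel G.Adj] (h : ℕ) (hh : 2 ≤ h)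
    (k : ℕ) (S : Finset V) (hne : S.Nonempty)
    (hconn : (G.induce (S : Set V)).Connected)
    (hdeg : ∀ v ∈ S, k ≤ ((cliquesIn G h S).filter (fun c => v ∈ c)).card) :
    IsCliqueCompact G h ((k : ℝ) / (h : ℝ)) S := by
  refine ⟨hne, hconn, fun U hU hUne => ?_⟩
  set A := cliquesIn G h S with hA
  set B := cliquesIn G h (S \ U) with hB
  have hBA : B ⊆ A := by
    intro c hc
    simp only [hA, hB, cliquesIn, Finset.mem_filter] at hc ⊢
    exact ⟨hc.1, hc.2.1, hc.2.2.trans (Finset.sdiff_subset)⟩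
  set T := A \ B with hT
  have hTA : T ⊆ A := Finset.sdiff_subset
  -- each clique in A has card h
  have hcardc : ∀ c ∈ A, c.card = h := by
    intro c hc
    simp only [hA, cliquesIn, Finset.mem_filter] at hc
    exact hc.2.1.card_eq
  -- double counting
  have double : ∑ v ∈ U, ((A.filter fun c => v ∈ c).card) =
      ∑ c ∈ A, ((U.filter fun v => v ∈ c).card) := by
    simp_rw [Finset.card_filter]
    rw [Finset.sum_comm]
  have hzero : ∀ c ∈ A, c ∉ T → ((U.filter fun v => v ∈ c).card) = 0 := by
    intro c hcA hcT
    have hcB : c ∈ B := by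
      by_contra hcB
      exact hcT (Finset.mem_sdiff.mpr ⟨hcA, hcB⟩)
    simp only [hB, cliquesIn, Finset.mem_filter] at hcB
    rw [Finset.card_eq_zero, Finset.filter_eq_empty_iff]
    intro v hvU hvc
    have := hcB.2.2 hvc
    exact (Finset.mem_sdiff.mp this).2 hvU
  have hrestrict : ∑ c ∈ A, ((U.filter fun v => v ∈ c).card) =
      ∑ c ∈ T, ((U.filter fun v => v ∈ c).card) :=
    (Finset.sum_subset hTA (fun c hc hcT => hzero c hc hcT)).symm
  have hbound : ∑ c ∈ T, ((U.filter fun v => v ∈ c).card) ≤ h * T.card := by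
    calc ∑ c ∈ T, ((U.filter fun v => v ∈ c).card)
        ≤ ∑ c ∈ T, h := by
          refine Finset.sum_le_sum fun c hc => ?_
          have : (U.filter fun v => v ∈ c) ⊆ c := fun v hv =>
            (Finset.mem_filter.mp hv).2
          calc (U.filter fun v => v ∈ c).card ≤ c.card := Finset.card_le_card this
            _ = h := hcardc c (hTA hc)
      _ = h * T.card := by rw [Finset.sum_const, smul_eq_mul, Nat.mul_comm]
  have hlow : k * U.card ≤ ∑ v ∈ U, ((A.filter fun c => v ∈ c).card) := by
    calc k * U.card = ∑ _v ∈ U, k := by rw [Finset.sum_const, smul_eq_mul, Nat.mul_comm]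
      _ ≤ ∑ v ∈ U, ((A.filter fun c => v ∈ c).card) :=
          Finset.sum_le_sum fun v hv => hdeg v (hU hv)
  have key : k * U.card ≤ h * T.card := by
    calc k * U.card ≤ ∑ v ∈ U, ((A.filter fun c => v ∈ c).card) := hlow
      _ = ∑ c ∈ T, ((U.filter fun v => v ∈ c).card) := by rw [double, hrestrict]
      _ ≤ h * T.card := hbound
  have hTcard : (T.card : ℝ) = (A.card : ℝ) - (B.card : ℝ) := by
    rw [hT, Finset.card_sdiff_of_subset hBA]
    push_cast [Nat.cast_sub (Finset.card_le_card hBA)]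
    ring
  have hh0 : (0 : ℝ) < (h : ℝ) := by positivity
  rw [← hTcard, div_mul_eq_mul_div, div_le_iff₀ hh0]
  calc (k : ℝ) * U.card ≤ (h : ℝ) * T.card := by exact_mod_cast key
    _ = (T.card : ℝ) * h := by ring
end

section
/- Let (α*, r*) be an optimal solution to CP(G, h). Then for every h-clique ψ ∈ Ψ_h(G) and every pair of vertices v, w ∈ ψ with r*(v) > r*(w), one has α*_{v,ψ} = 0. -/
open Finset

variable {V : Type*} [Fintype V] [DecidableEq V]

/-- If `(α*, r*)` is optimal for `CP(G,h)`, then for every `h`-clique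
`ψ` and vertices `v, w ∈ ψ` with `r*(v) > r*(w)`, we have `α*_{v,ψ} = 0`. -/
theorem stmt_8 (G : SimpleGraph V) [DecidableRel G.Adj] (h : ℕ) (hh : 2 ≤ h)
    (α : Finset V → V → ℝ) (hopt : CPOptimal G h α) :
    ∀ ψ ∈ cliquesIn G h Finset.univ, ∀ v ∈ ψ, ∀ w ∈ ψ,
      cpR G h α w < cpR G h α v → α ψ v = 0 := by
  intro ψ hψ v hv w hw hlt
  by_contra hαv
  obtain ⟨⟨hnn, hsum⟩, hmin⟩ := hopt
  set r := cpR G h α with hr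
  have hne : v ≠ w := by rintro rfl; exact lt_irrefl _ hlt
  have hαv0 : 0 < α ψ v := lt_of_le_of_ne (hnn ψ hψ v hv) (Ne.symm hαv)
  set δ : ℝ := min (α ψ v) ((r v - r w) / 2) with hδ
  have hδ0 : 0 < δ := lt_min hαv0 (by linarith)
  have hδα : δ ≤ α ψ v := min_le_left _ _
  have hδr : δ < r v - r w := lt_of_le_of_lt (min_le_right _ _) (by linarith)
  set β : Finset V → V → ℝ := fun c u =>
    α c u + (if c = ψ ∧ u = v then -δ else 0) + (if c = ψ ∧ u = w then δ else 0) with hβ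
  have hβfeas : CPFeasible G h β := by
    constructor
    · intro c hc u hu
      have h0 := hnn c hc u hu
      simp only [hβ]
      split_ifs with h1 h2 h2
      · linarith
      · obtain ⟨rfl, rfl⟩ := h1; linarith
      · linarith
      · linarith
    · intro c hc
      simp only [hβ, Finset.sum_add_distrib]
      rw [hsum c hc]
      have h1 : ∑ u ∈ c, (if c = ψ ∧ u = v then -δ else 0)
          = if c = ψ then -δ else 0 := by
        by_cases hc' : c = ψ
        · simp [hc', Finset.sum_ite_eq', hv]
        · simp [hc']
      have h2 : ∑ u ∈ c, (if c = ψ ∧ u = w then δ else 0)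
          = if c = ψ then δ else 0 := by
        by_cases hc' : c = ψ
        · simp [hc', Finset.sum_ite_eq', hw]
        · simp [hc']
      rw [h1, h2]
      split_ifs <;> ring
  have hψmem : ψ ∈ (cliquesIn G h Finset.univ).filter (fun c => v ∈ c) :=
    Finset.mem_filter.mpr ⟨hψ, hv⟩
  have hψmem' : ψ ∈ (cliquesIn G h Finset.univ).filter (fun c => w ∈ c) :=
    Finset.mem_filter.mpr ⟨hψ, hw⟩
  have hrβ : ∀ u, cpR G h β u =
      r u + (if u = v then -δ else 0) + (if u = w then δ else 0) := by
    intro u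
    simp only [cpR, hβ, Finset.sum_add_distrib, hr]
    congr 1
    · congr 1
      by_cases huv : u = v
      · subst huv
        simp [Finset.sum_ite_eq', Finset.mem_filter, hψ, hv]
      · simp [huv]
    · by_cases huw : u = w
      · subst huw
        simp [Finset.sum_ite_eq', Finset.mem_filter, hψ, hw]
      · simp [huw]
  have hobj : ∑ u : V, (cpR G h β u) ^ 2 =
      ∑ u : V, (r u) ^ 2 + (((r v - δ)^2 - (r v)^2) + ((r w + δ)^2 - (r w)^2)) := by
    have key : ∀ u : V, (cpR G h β u) ^ 2 = (r u) ^ 2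
        + ((if u = v then (r v - δ)^2 - (r v)^2 else 0)
        + (if u = w then (r w + δ)^2 - (r w)^2 else 0)) := by
      intro u
      rw [hrβ u]
      by_cases huv : u = v
      · subst huv
        have hne' : u ≠ w := hne
        rw [if_pos rfl, if_neg hne', if_pos rfl, if_neg hne']; ring
      · by_cases huw : u = w
        · subst huw
          rw [if_neg huv, if_pos rfl, if_neg huv, if_pos rfl]; ring
        · simp [huv, huw]
    rw [Finset.sum_congr rfl (fun u _ => key u), Finset.sum_add_distrib,
      Finset.sum_add_distrib, Finset.sum_ite_eq' Finset.univ v,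
      Finset.sum_ite_eq' Finset.univ w]
    simp
  have hle := hmin β hβfeas
  rw [hobj] at hle
  nlinarith [hle, hδ0, hδr]
end

section
/- Let (α*, r*) be an optimal solution to CP(G, h), let u ∈ V, and let T = {v ∈ V : r*(v) ≥ r*(u)}. Then for every nonempty subset U ⊆ T, the number of h-cliques of the induced subgraph G[T] that contain at least one vertex of U is at least r*(u)·|U|; in other words, G[T] satisfies the removal property |Ψ_h(G[T])| − |Ψ_h(G[T ∖ U])| ≥ r*(u)·|U| for all nonempty U ⊆ T. -/
open Finset

variable {V : Type*} [Fintype V] [DecidableEq V]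

lemma exchange (G : SimpleGraph V) [DecidableRel G.Adj] (h : ℕ)
    (α : Finset V → V → ℝ) (hopt : CPOptimal G h α)
    {ψ : Finset V} (hψ : ψ ∈ cliquesIn G h Finset.univ)
    {v w : V} (hv : v ∈ ψ) (hw : w ∈ ψ) (hpos : 0 < α ψ v) :
    cpR G h α v ≤ cpR G h α w := by
  by_contra hlt
  push_neg at hlt
  have hvw : v ≠ w := by
    rintro rfl; exact lt_irrefl _ hlt
  set rv := cpR G h α v with hrv
  set rw := cpR G h α w with hrw
  set ε := min (α ψ v) ((rv - rw)/2) with hεdef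
  have hε0 : 0 < ε := lt_min hpos (by linarith)
  have hε1 : ε ≤ α ψ v := min_le_left _ _
  have hε2 : ε ≤ (rv - rw)/2 := min_le_right _ _
  set β : Finset V → V → ℝ := fun ψ' x =>
    α ψ' x + (if ψ' = ψ ∧ x = v then -ε else 0) + (if ψ' = ψ ∧ x = w then ε else 0)
    with hβdef
  have hβfeas : CPFeasible G h β := by
    constructor
    · intro ψ' hψ' x hx
      have h0 := hopt.1.1 ψ' hψ' x hx
      simp only [hβdef]
      split_ifs with h1 h2 h2
      · exact absurd (h1.2.symm.trans h2.2) hvw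
      · obtain ⟨rfl, rfl⟩ := h1; linarith
      · linarith
      · linarith
    · intro ψ' hψ'
      have h1 := hopt.1.2 ψ' hψ'
      simp only [hβdef]
      rw [Finset.sum_add_distrib, Finset.sum_add_distrib, h1]
      by_cases hc : ψ' = ψ
      · subst hc
        have e1 : ∀ x ∈ ψ', (if ψ' = ψ' ∧ x = v then -ε else 0)
            = (if x = v then -ε else 0) := by intro x _; simp
        have e2 : ∀ x ∈ ψ', (if ψ' = ψ' ∧ x = w then ε else 0)
            = (if x = w then ε else 0) := by intro x _; simp
        rw [Finset.sum_congr rfl e1, Finset.sum_congr rfl e2,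
          Finset.sum_ite_eq' ψ' v (fun _ => -ε), Finset.sum_ite_eq' ψ' w (fun _ => ε),
          if_pos hv, if_pos hw]
        ring
      · have e1 : ∀ x ∈ ψ', (if ψ' = ψ ∧ x = v then -ε else 0) = 0 := by
          intro x _; simp [hc]
        have e2 : ∀ x ∈ ψ', (if ψ' = ψ ∧ x = w then ε else 0) = 0 := by
          intro x _; simp [hc]
        rw [Finset.sum_congr rfl e1, Finset.sum_congr rfl e2]
        simp
  -- compute cpR β
  have hcp : ∀ x : V, cpR G h β x = cpR G h α x
      + (if x = v then -ε else 0) + (if x = w then ε else 0) := by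
    intro x
    simp only [cpR, hβdef]
    rw [Finset.sum_add_distrib, Finset.sum_add_distrib]
    congr 1
    · congr 1
      by_cases hxv : x = v
      · have e1 : ∀ ψ' ∈ (cliquesIn G h Finset.univ).filter (fun ψ' => x ∈ ψ'),
            (if ψ' = ψ ∧ x = v then -ε else 0) = (if ψ' = ψ then -ε else 0) := by
          intro ψ' _; simp [hxv]
        rw [Finset.sum_congr rfl e1, Finset.sum_ite_eq' _ ψ (fun _ => -ε),
          if_pos (by simp [Finset.mem_filter, hψ, hxv, hv]), if_pos hxv]
      · have e1 : ∀ ψ' ∈ (cliquesIn G h Finset.univ).filter (fun ψ' => x ∈ ψ'),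
            (if ψ' = ψ ∧ x = v then -ε else 0) = 0 := by
          intro ψ' _; simp [hxv]
        rw [Finset.sum_congr rfl e1, if_neg hxv]
        simp
    · by_cases hxw : x = w
      · have e2 : ∀ ψ' ∈ (cliquesIn G h Finset.univ).filter (fun ψ' => x ∈ ψ'),
            (if ψ' = ψ ∧ x = w then ε else 0) = (if ψ' = ψ then ε else 0) := by
          intro ψ' _; simp [hxw]
        rw [Finset.sum_congr rfl e2, Finset.sum_ite_eq' _ ψ (fun _ => ε),
          if_pos (by simp [Finset.mem_filter, hψ, hxw, hw]), if_pos hxw]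
      · have e2 : ∀ ψ' ∈ (cliquesIn G h Finset.univ).filter (fun ψ' => x ∈ ψ'),
            (if ψ' = ψ ∧ x = w then ε else 0) = 0 := by
          intro ψ' _; simp [hxw]
        rw [Finset.sum_congr rfl e2, if_neg hxw]
        simp
  have hsum : ∑ x : V, (cpR G h β x) ^ 2
      = ∑ x : V, (cpR G h α x) ^ 2 + (2 * ε * ε + 2 * ε * (rw - rv)) := by
    have e : ∀ x : V, (cpR G h β x) ^ 2 = (cpR G h α x) ^ 2
        + ((if x = v then ε^2 - 2*ε*rv else 0) + (if x = w then ε^2 + 2*ε*rw else 0)) := by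
      intro x
      rw [hcp x]
      by_cases hxv : x = v <;> by_cases hxw : x = w
      · exact absurd (hxv.symm.trans hxw) hvw
      · subst hxv; rw [if_pos rfl, if_pos rfl, if_neg hxw, if_neg hxw, ← hrv]; ring
      · subst hxw; rw [if_neg hxv, if_neg hxv, if_pos rfl, if_pos rfl, ← hrw]; ring
      · rw [if_neg hxv, if_neg hxv, if_neg hxw, if_neg hxw]; ring
    rw [Finset.sum_congr rfl (fun x _ => e x), Finset.sum_add_distrib,
      Finset.sum_add_distrib, Finset.sum_ite_eq' _ v, Finset.sum_ite_eq' _ w,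
      if_pos (Finset.mem_univ v), if_pos (Finset.mem_univ w)]
    ring
  have hle := hopt.2 β hβfeas
  rw [hsum] at hle
  nlinarith

/-- Let `(α*, r*)` be optimal for `CP(G,h)`, `u ∈ V`, and
`T = {v : r*(v) ≥ r*(u)}`. Then for every nonempty `U ⊆ T`, the number of
`h`-cliques of `G[T]` meeting `U` is at least `r*(u)·|U|`; equivalently
`|Ψ_h(G[T])| − |Ψ_h(G[T∖U])| ≥ r*(u)·|U|`. -/
theorem stmt_10 (G : SimpleGraph V) [DecidableRel G.Adj] (h : ℕ) (hh : 2 ≤ h)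
    (α : Finset V → V → ℝ) (hopt : CPOptimal G h α) (u : V)
    (T : Finset V) (hT : T = Finset.univ.filter (fun v => cpR G h α u ≤ cpR G h α v)) :
    ∀ U ⊆ T, U.Nonempty →
      cpR G h α u * (U.card : ℝ) ≤
          (((cliquesIn G h T).filter (fun ψ => (ψ ∩ U).Nonempty)).card : ℝ) ∧
        cpR G h α u * (U.card : ℝ) ≤
          ((cliquesIn G h T).card : ℝ) - ((cliquesIn G h (T \ U)).card : ℝ) := by
  intro U hU hUne
  have hmemT : ∀ v : V, v ∈ T ↔ cpR G h α u ≤ cpR G h α v := by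
    intro v; rw [hT]; simp
  have hsubU : cliquesIn G h T ⊆ cliquesIn G h Finset.univ := by
    intro ψ hψ
    simp only [cliquesIn, Finset.mem_filter, Finset.mem_univ, true_and] at hψ ⊢
    exact ⟨hψ.1, Finset.subset_univ _⟩
  -- Step A: for v ∈ T, cpR α v is supported on cliques inside T
  have stepA : ∀ v ∈ T, cpR G h α v
      = ∑ ψ ∈ (cliquesIn G h T).filter (fun ψ => v ∈ ψ), α ψ v := by
    intro v hvT
    rw [cpR]
    refine (Finset.sum_subset ?_ ?_).symm
    · intro ψ hψ
      simp only [Finset.mem_filter] at hψ ⊢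
      exact ⟨hsubU hψ.1, hψ.2⟩
    · intro ψ hψ hψn
      simp only [Finset.mem_filter] at hψ hψn
      by_contra hne
      have hpos : 0 < α ψ v :=
        lt_of_le_of_ne (hopt.1.1 ψ hψ.1 v hψ.2) (Ne.symm hne)
      have hψu : ψ ∈ cliquesIn G h Finset.univ := hψ.1
      have hψT : ψ ∈ cliquesIn G h T := by
        have hcl : G.IsNClique h ψ := by
          have := hψu; simp only [cliquesIn, Finset.mem_filter] at this
          exact this.2.1
        simp only [cliquesIn, Finset.mem_filter, Finset.mem_univ, true_and]
        refine ⟨hcl, fun w hw => ?_⟩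
        rw [hmemT]
        calc cpR G h α u ≤ cpR G h α v := (hmemT v).1 hvT
          _ ≤ cpR G h α w := exchange G h α hopt hψu hψ.2 hw hpos
      exact hψn ⟨hψT, hψ.2⟩
  -- Step B: sum over U
  have stepB : ∑ v ∈ U, cpR G h α v ≤
      (((cliquesIn G h T).filter (fun ψ => (ψ ∩ U).Nonempty)).card : ℝ) := by
    calc ∑ v ∈ U, cpR G h α v
        = ∑ v ∈ U, ∑ ψ ∈ (cliquesIn G h T).filter (fun ψ => v ∈ ψ), α ψ v :=
          Finset.sum_congr rfl (fun v hv => stepA v (hU hv))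
      _ = ∑ v ∈ U, ∑ ψ ∈ cliquesIn G h T, if v ∈ ψ then α ψ v else 0 :=
          Finset.sum_congr rfl (fun v _ => (Finset.sum_filter _ _))
      _ = ∑ ψ ∈ cliquesIn G h T, ∑ v ∈ U, if v ∈ ψ then α ψ v else 0 :=
          Finset.sum_comm
      _ ≤ ∑ ψ ∈ cliquesIn G h T, if (ψ ∩ U).Nonempty then (1:ℝ) else 0 := by
          refine Finset.sum_le_sum (fun ψ hψ => ?_)
          by_cases hne : (ψ ∩ U).Nonempty
          · rw [if_pos hne, ← Finset.sum_filter]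
            have h1 := hopt.1.2 ψ (hsubU hψ)
            rw [← h1]
            refine Finset.sum_le_sum_of_subset_of_nonneg ?_ ?_
            · intro x hx
              exact (Finset.mem_filter.1 hx).2
            · intro x hx _
              exact hopt.1.1 ψ (hsubU hψ) x hx
          · rw [if_neg hne]
            refine le_of_eq (Finset.sum_eq_zero (fun x hx => ?_))
            rw [if_neg]
            intro hxψ
            exact hne ⟨x, Finset.mem_inter.2 ⟨hxψ, hx⟩⟩
      _ = (((cliquesIn G h T).filter (fun ψ => (ψ ∩ U).Nonempty)).card : ℝ) := by
          rw [← Finset.sum_filter]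
          simp
  have main : cpR G h α u * (U.card : ℝ) ≤
      (((cliquesIn G h T).filter (fun ψ => (ψ ∩ U).Nonempty)).card : ℝ) := by
    refine le_trans ?_ stepB
    rw [mul_comm, ← nsmul_eq_mul, ← Finset.sum_const]
    exact Finset.sum_le_sum (fun v hv => (hmemT v).1 (hU hv))
  refine ⟨main, ?_⟩
  have hsplit : cliquesIn G h (T \ U)
      = (cliquesIn G h T).filter (fun ψ => ¬ (ψ ∩ U).Nonempty) := by
    ext ψ
    simp only [cliquesIn, Finset.mem_filter, Finset.mem_univ, true_and,
      Finset.subset_sdiff, Finset.not_nonempty_iff_eq_empty,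
      ← Finset.disjoint_iff_inter_eq_empty]
    tauto
  have hcard := Finset.card_filter_add_card_filter_not
    (s := cliquesIn G h T) (p := fun ψ => (ψ ∩ U).Nonempty)
  rw [hsplit]
  push_cast [← hcard]
  linarith [main]
end

section
/- Let G[S] be a locally h-clique densest subgraph of G. Then for every edge (u, v) ∈ E with u ∈ S and v ∈ V ∖ S, the h-clique compact numbers satisfy φ_h(u) > φ_h(v). -/
open Finset

variable {V : Type*} [Fintype V] [DecidableEq V]

lemma cliquesIn_mono_s11 (G : SimpleGraph V) [DecidableRel G.Adj] (h : ℕ) {A B : Finset V}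
    (hAB : A ⊆ B) : cliquesIn G h A ⊆ cliquesIn G h B := by
  intro c hc
  simp only [cliquesIn, mem_filter, mem_univ, true_and] at hc ⊢
  exact ⟨hc.1, hc.2.trans hAB⟩

lemma removal_mono (G : SimpleGraph V) [DecidableRel G.Adj] (h : ℕ) {A B : Finset V}
    (U : Finset V) (hAB : A ⊆ B) :
    ((cliquesIn G h A).card : ℝ) - ((cliquesIn G h (A \ U)).card : ℝ) ≤
      ((cliquesIn G h B).card : ℝ) - ((cliquesIn G h (B \ U)).card : ℝ) := by
  have hA : cliquesIn G h (A \ U) ⊆ cliquesIn G h A := cliquesIn_mono_s11 G h sdiff_subset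
  have hB : cliquesIn G h (B \ U) ⊆ cliquesIn G h B := cliquesIn_mono_s11 G h sdiff_subset
  have hsub : cliquesIn G h A \ cliquesIn G h (A \ U) ⊆
      cliquesIn G h B \ cliquesIn G h (B \ U) := by
    intro c hc
    simp only [mem_sdiff, cliquesIn, mem_filter, mem_univ, true_and] at hc ⊢
    obtain ⟨⟨hcl, hcA⟩, hnot⟩ := hc
    refine ⟨⟨hcl, hcA.trans hAB⟩, ?_⟩
    rintro ⟨-, hcBU⟩
    exact hnot ⟨hcl, fun x hx => mem_sdiff.mpr ⟨hcA hx, (mem_sdiff.mp (hcBU hx)).2⟩⟩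
  have h1 := card_le_card hsub
  rw [card_sdiff_of_subset hA, card_sdiff_of_subset hB] at h1
  have h2 : ((((cliquesIn G h A).card - (cliquesIn G h (A \ U)).card : ℕ)) : ℝ) ≤
      (((cliquesIn G h B).card - (cliquesIn G h (B \ U)).card : ℕ) : ℝ) := by
    exact_mod_cast h1
  rwa [Nat.cast_sub (card_le_card hA), Nat.cast_sub (card_le_card hB)] at h2

lemma compact_cut (G : SimpleGraph V) [DecidableRel G.Adj] (h : ℕ) {ρ : ℝ} (hρ : 0 ≤ ρ)
    {T : Finset V} (hT : IsCliqueCompact G h ρ T) {U : Finset V} (hU : U ⊆ T) :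
    ρ * (U.card : ℝ) ≤ ((cliquesIn G h T).card : ℝ) - ((cliquesIn G h (T \ U)).card : ℝ) := by
  rcases U.eq_empty_or_nonempty with rfl | hne
  · simp
  · exact hT.2.2 U hU hne

lemma compact_mono_rho (G : SimpleGraph V) [DecidableRel G.Adj] (h : ℕ) {ρ ρ' : ℝ}
    (h0 : 0 ≤ ρ') (hle : ρ' ≤ ρ) {T : Finset V} (hT : IsCliqueCompact G h ρ T) :
    IsCliqueCompact G h ρ' T := by
  refine ⟨hT.1, hT.2.1, fun U hU hne => ?_⟩
  exact le_trans (mul_le_mul_of_nonneg_right hle (Nat.cast_nonneg _)) (hT.2.2 U hU hne)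

lemma compact_union (G : SimpleGraph V) [DecidableRel G.Adj] (h : ℕ) {ρ : ℝ} (hρ : 0 ≤ ρ)
    {S T : Finset V} (hS : IsCliqueCompact G h ρ S) (hT : IsCliqueCompact G h ρ T)
    {u v : V} (hu : u ∈ S) (hv : v ∈ T) (hadj : G.Adj u v) :
    IsCliqueCompact G h ρ (S ∪ T) := by
  have huST : u ∈ S ∪ T := mem_union_left _ hu
  have hvST : v ∈ S ∪ T := mem_union_right _ hv
  refine ⟨⟨u, huST⟩, ?_, ?_⟩
  · -- connectivity
    let fS : G.induce ((S : Set V)) →g G.induce (((S ∪ T : Finset V)) : Set V) :=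
      ⟨fun a => ⟨a.1, by simpa using Or.inl (by exact_mod_cast a.2)⟩, fun {a b} hab => hab⟩
    let fT : G.induce ((T : Set V)) →g G.induce (((S ∪ T : Finset V)) : Set V) :=
      ⟨fun a => ⟨a.1, by simpa using Or.inr (by exact_mod_cast a.2)⟩, fun {a b} hab => hab⟩
    have hreach : ∀ a : (((S ∪ T : Finset V)) : Set V),
        (G.induce (((S ∪ T : Finset V)) : Set V)).Reachable a ⟨u, huST⟩ := by
      intro a
      have ha : (a : V) ∈ S ∪ T := by exact_mod_cast a.2
      rcases mem_union.mp ha with haS | haT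
      · have := (hS.2.1.preconnected ⟨a, haS⟩ ⟨u, hu⟩).map fS
        have heq1 : fS ⟨a, haS⟩ = a := Subtype.ext rfl
        have heq2 : fS ⟨u, hu⟩ = ⟨u, huST⟩ := Subtype.ext rfl
        rwa [heq1, heq2] at this
      · have h1 := (hT.2.1.preconnected ⟨a, haT⟩ ⟨v, hv⟩).map fT
        have heq1 : fT ⟨a, haT⟩ = a := Subtype.ext rfl
        have heq2 : fT ⟨v, hv⟩ = ⟨v, hvST⟩ := Subtype.ext rfl
        rw [heq1, heq2] at h1
        have h2 : (G.induce (((S ∪ T : Finset V)) : Set V)).Adj ⟨v, hvST⟩ ⟨u, huST⟩ :=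
          hadj.symm
        exact h1.trans h2.reachable
    haveI : Nonempty (((S ∪ T : Finset V)) : Set V) := ⟨⟨u, huST⟩⟩
    exact SimpleGraph.Connected.mk fun a b => (hreach a).trans (hreach b).symm
  · intro U hU hUne
    set U₁ := U ∩ S with hU₁
    set U₂ := U \ S with hU₂
    have hU₂T : U₂ ⊆ T := by
      intro x hx
      rcases mem_union.mp (hU (mem_sdiff.mp hx).1) with hxS | hxT
      · exact absurd hxS (mem_sdiff.mp hx).2
      · exact hxT
    have hsplit : (S ∪ T) \ U = ((S ∪ T) \ U₂) \ U₁ := by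
      ext x
      simp only [hU₁, hU₂, mem_sdiff, mem_union, mem_inter]
      tauto
    have st1 : ρ * (U₂.card : ℝ) ≤
        ((cliquesIn G h (S ∪ T)).card : ℝ) - ((cliquesIn G h ((S ∪ T) \ U₂)).card : ℝ) :=
      le_trans (compact_cut G h hρ hT hU₂T) (removal_mono G h U₂ subset_union_right)
    have hSsub : S ⊆ (S ∪ T) \ U₂ := fun x hx =>
      mem_sdiff.mpr ⟨mem_union_left _ hx, fun hxU₂ => (mem_sdiff.mp hxU₂).2 hx⟩
    have st2 : ρ * (U₁.card : ℝ) ≤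
        ((cliquesIn G h ((S ∪ T) \ U₂)).card : ℝ) -
          ((cliquesIn G h (((S ∪ T) \ U₂) \ U₁)).card : ℝ) :=
      le_trans (compact_cut G h hρ hS inter_subset_right) (removal_mono G h U₁ hSsub)
    have hcard : (U₁.card : ℝ) + (U₂.card : ℝ) = (U.card : ℝ) := by
      exact_mod_cast card_inter_add_card_sdiff U S
    rw [hsplit]
    nlinarith [st1, st2]

lemma compact_zero_singleton (G : SimpleGraph V) [DecidableRel G.Adj] (h : ℕ) (w : V) :
    IsCliqueCompact G h 0 {w} := by
  refine ⟨singleton_nonempty w, ?_, ?_⟩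
  · haveI : Nonempty ((({w} : Finset V)) : Set V) := ⟨⟨w, by simp⟩⟩
    refine SimpleGraph.Connected.mk fun a b => ?_
    have ha : (a : V) = w := by have := a.2; simpa using this
    have hb : (b : V) = w := by have := b.2; simpa using this
    have : a = b := Subtype.ext (ha.trans hb.symm)
    rw [this]
  · intro U hU hUne
    rw [zero_mul, sub_nonneg]
    exact_mod_cast card_le_card (cliquesIn_mono_s11 G h (sdiff_subset : {w} \ U ⊆ {w}))

lemma bddAbove_compactSet (G : SimpleGraph V) [DecidableRel G.Adj] (h : ℕ) (w : V) :
    BddAbove {ρ : ℝ | 0 ≤ ρ ∧ ∃ S : Finset V, w ∈ S ∧ IsCliqueCompact G h ρ S} := by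
  refine ⟨((cliquesIn G h Finset.univ).card : ℝ), fun ρ hρ => ?_⟩
  obtain ⟨h0, T, hwT, hT⟩ := hρ
  have hcut := hT.2.2 T (Finset.Subset.refl T) hT.1
  have h1 : (1 : ℝ) ≤ (T.card : ℝ) := by exact_mod_cast hT.1.card_pos
  have h2 : ((cliquesIn G h T).card : ℝ) ≤ ((cliquesIn G h Finset.univ).card : ℝ) := by
    exact_mod_cast card_le_card (cliquesIn_mono_s11 G h (subset_univ T))
  have h3 : (0 : ℝ) ≤ ((cliquesIn G h (T \ T)).card : ℝ) := Nat.cast_nonneg _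
  nlinarith

lemma isClosed_compactSet (G : SimpleGraph V) [DecidableRel G.Adj] (h : ℕ) (w : V) :
    IsClosed {ρ : ℝ | 0 ≤ ρ ∧ ∃ S : Finset V, w ∈ S ∧ IsCliqueCompact G h ρ S} := by
  have heq : {ρ : ℝ | 0 ≤ ρ ∧ ∃ S : Finset V, w ∈ S ∧ IsCliqueCompact G h ρ S} =
      ⋃ T : Finset V, {ρ : ℝ | 0 ≤ ρ ∧ w ∈ T ∧ IsCliqueCompact G h ρ T} := by
    ext ρ
    simp only [Set.mem_setOf_eq, Set.mem_iUnion]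
    tauto
  rw [heq]
  refine isClosed_iUnion_of_finite fun T => ?_
  by_cases hc : w ∈ T ∧ T.Nonempty ∧ (G.induce (T : Set V)).Connected
  · have heq2 : {ρ : ℝ | 0 ≤ ρ ∧ w ∈ T ∧ IsCliqueCompact G h ρ T} =
        {ρ : ℝ | 0 ≤ ρ} ∩ ⋂ (U : Finset V) (_ : U ⊆ T ∧ U.Nonempty),
          {ρ : ℝ | ρ * (U.card : ℝ) ≤
            ((cliquesIn G h T).card : ℝ) - ((cliquesIn G h (T \ U)).card : ℝ)} := by
      ext ρ
      simp only [Set.mem_setOf_eq, Set.mem_inter_iff, Set.mem_iInter, IsCliqueCompact]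
      constructor
      · rintro ⟨h0, -, -, -, hcut⟩
        exact ⟨h0, fun U hU => hcut U hU.1 hU.2⟩
      · rintro ⟨h0, hcut⟩
        exact ⟨h0, hc.1, hc.2.1, hc.2.2, fun U hU hne => hcut U ⟨hU, hne⟩⟩
    rw [heq2]
    refine isClosed_Ici.inter (isClosed_iInter fun U => isClosed_iInter fun _ => ?_)
    exact isClosed_le (continuous_id.mul continuous_const) continuous_const
  · have heq2 : {ρ : ℝ | 0 ≤ ρ ∧ w ∈ T ∧ IsCliqueCompact G h ρ T} = ∅ := by
      ext ρ
      simp only [Set.mem_setOf_eq, Set.mem_empty_iff_false, iff_false, not_and]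
      intro _ hwT hcomp
      exact hc ⟨hwT, hcomp.1, hcomp.2.1⟩
    rw [heq2]
    exact isClosed_empty

/-- If `G[S]` is an LhCDS and `(u,v) ∈ E` with `u ∈ S`, `v ∉ S`,
then `φ_h(u) > φ_h(v)`. -/
theorem stmt_11 (G : SimpleGraph V) [DecidableRel G.Adj] (h : ℕ) (hh : 2 ≤ h)
    (S : Finset V) (hS : IsLhCDS G h S) (u v : V) (hadj : G.Adj u v)
    (hu : u ∈ S) (hv : v ∉ S) :
    compactNumber G h v < compactNumber G h u := by
  have hρS0 : 0 ≤ cliqueDensity G h S :=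
    div_nonneg (Nat.cast_nonneg _) (Nat.cast_nonneg _)
  have hu_ge : cliqueDensity G h S ≤ compactNumber G h u :=
    le_csSup (bddAbove_compactSet G h u) ⟨hρS0, S, hu, hS.1⟩
  have hv_lt : compactNumber G h v < cliqueDensity G h S := by
    by_contra hle
    push_neg at hle
    have hmem := (isClosed_compactSet G h v).csSup_mem
      ⟨0, le_refl 0, {v}, mem_singleton_self v, compact_zero_singleton G h v⟩
      (bddAbove_compactSet G h v)
    obtain ⟨h0, T, hvT, hT⟩ := hmem
    have hTρS : IsCliqueCompact G h (cliqueDensity G h S) T :=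
      compact_mono_rho G h hρS0 hle hT
    have hcomp := compact_union G h hρS0 hS.1 hTρS hu hvT hadj
    exact hS.2 ⟨S ∪ T,
      (Finset.ssubset_iff_of_subset subset_union_left).mpr ⟨v, mem_union_right _ hvT, hv⟩,
      hcomp⟩
  linarith
end

section
/- Let ρ ≥ 0 be a real number and suppose G[S'] is an h-clique ρ-compact induced subgraph of G. Then for every subset S ⊆ V, |Ψ_h(G[S ∪ S'])| − ρ·|S ∪ S'| ≥ |Ψ_h(G[S])| − ρ·|S|; that is, enlarging any vertex set S by the vertex set of an h-clique ρ-compact subgraph does not decrease the value of the function S ↦ |Ψ_h(G[S])| − ρ·|S|. -/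
open Finset

variable {V : Type*} [Fintype V] [DecidableEq V]

/-- If `G[S']` is `h`-clique `ρ`-compact (`ρ ≥ 0`), then for every
`S ⊆ V`, `|Ψ_h(G[S∪S'])| − ρ·|S∪S'| ≥ |Ψ_h(G[S])| − ρ·|S|`. -/
theorem stmt_16 (G : SimpleGraph V) [DecidableRel G.Adj] (h : ℕ) (hh : 2 ≤ h)
    (ρ : ℝ) (hρ : 0 ≤ ρ) (S' : Finset V)
    (hcompact : IsCliqueCompact G h ρ S') (S : Finset V) :
    ((cliquesIn G h S).card : ℝ) - ρ * (S.card : ℝ) ≤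
      ((cliquesIn G h (S ∪ S')).card : ℝ) - ρ * ((S ∪ S').card : ℝ) := by
  have mono : ∀ A B : Finset V, A ⊆ B → cliquesIn G h A ⊆ cliquesIn G h B := by
    intro A B hAB c hc
    simp only [cliquesIn, mem_filter, mem_univ, true_and] at hc ⊢
    exact ⟨hc.1, hc.2.trans hAB⟩
  set U := S' \ S with hU
  by_cases hUe : U.Nonempty
  · obtain ⟨-, -, hcomp⟩ := hcompact
    have key := hcomp U sdiff_subset hUe
    have hdiff : S' \ U = S' ∩ S := by
      ext x; simp only [hU, mem_sdiff, mem_inter]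
      tauto
    rw [hdiff] at key
    -- card of union
    have hcardU : ((S ∪ S').card : ℝ) = (S.card : ℝ) + (U.card : ℝ) := by
      rw [← Nat.cast_add]
      norm_cast
      rw [hU, union_comm, Nat.add_comm]
      exact (card_sdiff_add_card S' S).symm
    -- clique counting: cliquesIn S' \ cliquesIn (S'∩S) injects into
    -- cliquesIn (S∪S') \ cliquesIn S
    have hsub : cliquesIn G h S' \ cliquesIn G h (S' ∩ S) ⊆
        cliquesIn G h (S ∪ S') \ cliquesIn G h S := by
      intro c hc
      rw [mem_sdiff] at hc ⊢
      obtain ⟨hc1, hc2⟩ := hc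
      simp only [cliquesIn, mem_filter, mem_univ, true_and] at hc1 hc2 ⊢
      refine ⟨⟨hc1.1, hc1.2.trans subset_union_right⟩, ?_⟩
      rintro ⟨-, hcS⟩
      exact hc2 ⟨hc1.1, subset_inter hc1.2 hcS⟩
    have hcards : (cliquesIn G h S').card - (cliquesIn G h (S' ∩ S)).card ≤
        (cliquesIn G h (S ∪ S')).card - (cliquesIn G h S).card := by
      have h1 := card_le_card hsub
      rw [card_sdiff_of_subset (mono _ _ inter_subset_left),
        card_sdiff_of_subset (mono _ _ subset_union_left)] at h1
      omega
    have h2 : (cliquesIn G h (S' ∩ S)).card ≤ (cliquesIn G h S').card :=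
      card_le_card (mono _ _ inter_subset_left)
    have h3 : (cliquesIn G h S).card ≤ (cliquesIn G h (S ∪ S')).card :=
      card_le_card (mono _ _ subset_union_left)
    have hcardsR : ((cliquesIn G h S').card : ℝ) - ((cliquesIn G h (S' ∩ S)).card : ℝ) ≤
        ((cliquesIn G h (S ∪ S')).card : ℝ) - ((cliquesIn G h S).card : ℝ) := by
      rw [← Nat.cast_sub h2, ← Nat.cast_sub h3]
      exact_mod_cast hcards
    rw [hcardU]
    nlinarith [key, hcardsR]
  · rw [not_nonempty_iff_eq_empty] at hUe
    have : S ∪ S' = S := by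
      rw [union_eq_left]
      intro x hx
      by_contra hxS
      have : x ∈ U := by simp [hU, hx, hxS]
      simp [hUe] at this
    rw [this]
end
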